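/- arXiv:2512.08607 — 3 statements merged into one kernel-verified Lean document; each statement's English description precedes it below -/
import Mathlib

section
/- Let α : ℝ → ℝ be continuous and strictly increasing with α(0) = 0, and let α_p : [0,Λ] → ℝ≥0 be continuous and strictly increasing with α_p(0) = 0 and α(−ξ) ≤ −α_p(ξ) for all ξ ∈ [0,Λ]. Then there exists a continuous strictly increasing β : ℝ → ℝ with β(0) = 0 such that α(s) + α_p(λ) ≤ β(s + λ) for all s ∈ ℝ and all λ ∈ [0, Λ]. -/
theorem exists_classK_upper_bound
    (Λ : ℝ) (hΛ : 0 < Λ)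
    (α : ℝ → ℝ) (hα_cont : Continuous α) (hα_mono : StrictMono α) (hα0 : α 0 = 0)
    (αp : ℝ → ℝ) (hαp_cont : ContinuousOn αp (Set.Icc 0 Λ))
    (hαp_mono : StrictMonoOn αp (Set.Icc 0 Λ)) (hαp0 : αp 0 = 0)
    (hαp_nonneg : ∀ ξ ∈ Set.Icc (0:ℝ) Λ, 0 ≤ αp ξ)
    (hcomp : ∀ ξ ∈ Set.Icc (0:ℝ) Λ, α (-ξ) ≤ -αp ξ) :
    ∃ β : ℝ → ℝ, Continuous β ∧ StrictMono β ∧ β 0 = 0 ∧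
      ∀ s : ℝ, ∀ l ∈ Set.Icc (0:ℝ) Λ, α s + αp l ≤ β (s + l) := by
  have hK : IsCompact (Set.Icc (0:ℝ) Λ) := isCompact_Icc
  have h0mem : (0:ℝ) ∈ Set.Icc (0:ℝ) Λ := ⟨le_refl _, le_of_lt hΛ⟩
  have hne : (Set.Icc (0:ℝ) Λ).Nonempty := ⟨0, h0mem⟩
  set f : ℝ → ℝ → ℝ := fun r l => α (r - l) + αp l with hf
  have hfc : ∀ r, ContinuousOn (f r) (Set.Icc 0 Λ) := by
    intro r
    exact ((hα_cont.comp (continuous_const.sub continuous_id)).continuousOn).add hαp_cont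
  have hScomp : ∀ r, IsCompact (f r '' Set.Icc 0 Λ) := fun r => hK.image_of_continuousOn (hfc r)
  have hSne : ∀ r, (f r '' Set.Icc 0 Λ).Nonempty := fun r => hne.image _
  have hSbdd : ∀ r, BddAbove (f r '' Set.Icc 0 Λ) := fun r => (hScomp r).bddAbove
  set β : ℝ → ℝ := fun r => sSup (f r '' Set.Icc 0 Λ) with hβ
  have hle : ∀ r l, l ∈ Set.Icc (0:ℝ) Λ → f r l ≤ β r := by
    intro r l hl
    exact le_csSup (hSbdd r) ⟨l, hl, rfl⟩
  -- strict monotonicity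
  have hmono : StrictMono β := by
    intro a b hab
    obtain ⟨l, hl, hleq⟩ := (hScomp a).sSup_mem (hSne a)
    have hba : β a = f a l := hleq.symm
    rw [hba]
    calc f a l < f b l := by
          simp only [hf]
          have : a - l < b - l := by linarith
          have := hα_mono this
          linarith
      _ ≤ β b := hle b l hl
  -- β 0 = 0
  have hzero : β 0 = 0 := by
    apply le_antisymm
    · apply csSup_le (hSne 0)
      rintro x ⟨l, hl, rfl⟩
      have h1 := hcomp l hl
      simp only [hf, zero_sub]
      linarith
    · have := hle 0 0 h0mem
      simp only [hf, sub_zero, hα0, hαp0, add_zero] at this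
      exact this
  -- continuity
  have hcont : Continuous β := by
    rw [Metric.continuous_iff]
    intro b ε hε
    have hKb : IsCompact (Set.Icc (b - 1 - Λ) (b + 1)) := isCompact_Icc
    have huc : UniformContinuousOn α (Set.Icc (b - 1 - Λ) (b + 1)) :=
      hKb.uniformContinuousOn_of_continuous hα_cont.continuousOn
    rw [Metric.uniformContinuousOn_iff] at huc
    obtain ⟨δ, hδ, hδ'⟩ := huc (ε / 2) (by linarith)
    refine ⟨min δ 1, lt_min hδ one_pos, ?_⟩
    intro a hab
    rw [Real.dist_eq] at hab
    have hab1 : |a - b| < 1 := lt_of_lt_of_le hab (min_le_right _ _)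
    have habδ : |a - b| < δ := lt_of_lt_of_le hab (min_le_left _ _)
    have hab1' := abs_lt.mp hab1
    have key : ∀ l ∈ Set.Icc (0:ℝ) Λ, |α (a - l) - α (b - l)| < ε / 2 := by
      intro l hl
      have hla : a - l ∈ Set.Icc (b - 1 - Λ) (b + 1) := by
        constructor <;> [linarith [hl.2]; linarith [hl.1]]
      have hlb : b - l ∈ Set.Icc (b - 1 - Λ) (b + 1) := by
        constructor <;> [linarith [hl.2]; linarith [hl.1]]
      have hd : dist (a - l) (b - l) < δ := by
        rw [Real.dist_eq]; simpa using habδ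
      have := hδ' (a - l) hla (b - l) hlb hd
      rwa [Real.dist_eq] at this
    have h1 : β a ≤ β b + ε / 2 := by
      apply csSup_le (hSne a)
      rintro x ⟨l, hl, rfl⟩
      have h2 := (abs_lt.mp (key l hl)).2
      have h3 := hle b l hl
      simp only [hf] at h3 ⊢
      linarith
    have h2 : β b ≤ β a + ε / 2 := by
      apply csSup_le (hSne b)
      rintro x ⟨l, hl, rfl⟩
      have h2 := (abs_lt.mp (key l hl)).1
      have h3 := hle a l hl
      simp only [hf] at h3 ⊢
      linarith
    rw [Real.dist_eq, abs_sub_lt_iff]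
    constructor <;> linarith
  exact ⟨β, hcont, hmono, hzero, fun s l hl => by
    have := hle (s + l) l hl
    simpa [hf] using this⟩
end

section
/- Under the stronger pointwise CBF condition db(x; f(x,u)) ≥ −α(b(x)) holding for all u ∈ U and all x, and with dynamics equivariant under the diffeomorphism D(·;p), the transformed function b_p(x) := b(D(x;p)) satisfies db_p(x; f(x,u)) ≥ −α(b_p(x)) for all u ∈ U and all x. -/
/-!
The Dini derivative of a locally Lipschitz function along a differentiable curve depends only on
the curve's velocity: the difference quotients along the curve and along its tangent line differ
by at most a Lipschitz constant times the slope error of the curve, which tends to `0`. Hence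
`db_p(x; v) = db(D x; JD x v)`, and by equivariance `JD x (f x u) = f (D x) (Du u)` with
`Du u ∈ U`, so the CBF inequality at `D x` transfers to `x`.
-/

open Filter

/-- Lower Dini directional derivative. -/
noncomputable def dini {E : Type*} [NormedAddCommGroup E] [NormedSpace ℝ E]
    (b : E → ℝ) (x v : E) : ℝ :=
  Filter.liminf (fun ε : ℝ => (b (x + ε • v) - b x) / ε) (nhdsWithin 0 (Set.Ioi 0))

open Topology

theorem Filter.liminf_add_of_tendsto_zero {ι : Type*} {l : Filter ι} [l.NeBot] {u v : ι → ℝ}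
    (hu : Tendsto u l (𝓝 0)) (hv_ge : IsBoundedUnder (· ≥ ·) l v)
    (hv_le : IsBoundedUnder (· ≤ ·) l v) :
    liminf (u + v) l = liminf v l := by
  apply le_antisymm
  · simpa [hu.limsup_eq] using
      liminf_add_le hu.isBoundedUnder_ge hu.isBoundedUnder_le hv_ge hv_le.isCoboundedUnder_ge
  · simpa [hu.liminf_eq] using
      le_liminf_add hu.isBoundedUnder_ge hu.isBoundedUnder_le hv_ge hv_le.isCoboundedUnder_ge

variable {E F : Type*} [NormedAddCommGroup E] [NormedSpace ℝ E]
  [NormedAddCommGroup F] [NormedSpace ℝ F]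

theorem LipschitzOnWith.abs_sub_div_le {b : F → ℝ} {K : NNReal} {s : Set F}
    (hb : LipschitzOnWith K b s) {p q : F} (hp : p ∈ s) (hq : q ∈ s) (ε : ℝ) :
    |(b p - b q) / ε| ≤ K * ‖ε⁻¹ • (p - q)‖ := by
  have hpq : |b p - b q| ≤ K * ‖p - q‖ := by
    simpa [Real.dist_eq, dist_eq_norm] using hb.dist_le_mul p hp q hq
  rw [abs_div, norm_smul, norm_inv, Real.norm_eq_abs, div_eq_mul_inv]
  calc |b p - b q| * |ε|⁻¹ ≤ K * ‖p - q‖ * |ε|⁻¹ := by gcongr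
    _ = K * (|ε|⁻¹ * ‖p - q‖) := by ring

theorem liminf_slope_comp_eq_dini {b : F → ℝ} {K : NNReal} {s : Set F} {g : ℝ → F} {w : F}
    (hg : HasDerivAt g w 0) (hs : s ∈ 𝓝 (g 0)) (hb : LipschitzOnWith K b s) :
    liminf (fun ε => (b (g ε) - b (g 0)) / ε) (𝓝[>] 0) = dini b (g 0) w := by
  set y := g 0
  have hline : Tendsto (fun ε : ℝ => y + ε • w) (𝓝[>] 0) (𝓝 y) := by
    have : Continuous fun ε : ℝ => y + ε • w := by fun_prop
    simpa using (this.tendsto 0).mono_left nhdsWithin_le_nhds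
  have hline_mem : ∀ᶠ ε in 𝓝[>] (0 : ℝ), y + ε • w ∈ s := hline hs
  have hg_mem : ∀ᶠ ε in 𝓝[>] (0 : ℝ), g ε ∈ s :=
    (hg.continuousAt.tendsto.mono_left nhdsWithin_le_nhds) hs
  have hslope_err : Tendsto (fun ε : ℝ => ε⁻¹ • (g ε - (y + ε • w))) (𝓝[>] 0) (𝓝 0) := by
    have hslope := hg.tendsto_slope_zero_right
    simp only [zero_add] at hslope
    refine (tendsto_sub_nhds_zero_iff.2 hslope).congr' ?_
    filter_upwards [self_mem_nhdsWithin] with ε (hε : 0 < ε)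
    rw [sub_add_eq_sub_sub, smul_sub _ (g ε - y), smul_smul, inv_mul_cancel₀ hε.ne', one_smul]
  have hcurve_line : Tendsto (fun ε => (b (g ε) - b (y + ε • w)) / ε) (𝓝[>] 0) (𝓝 0) := by
    refine squeeze_zero_norm' ?_ (by simpa using hslope_err.norm.const_mul (K : ℝ))
    filter_upwards [hg_mem, hline_mem] with ε hgε hlε
    exact hb.abs_sub_div_le hgε hlε ε
  have hquot_bdd : ∀ᶠ ε in 𝓝[>] (0 : ℝ), |(b (y + ε • w) - b y) / ε| ≤ K * ‖w‖ := by
    filter_upwards [hline_mem, self_mem_nhdsWithin] with ε hlε (hε : 0 < ε)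
    simpa [smul_smul, inv_mul_cancel₀ hε.ne'] using hb.abs_sub_div_le hlε (mem_of_mem_nhds hs) ε
  rw [dini, ← liminf_add_of_tendsto_zero hcurve_line
    (isBoundedUnder_of_eventually_ge (hquot_bdd.mono fun _ h => neg_le_of_abs_le h))
    (isBoundedUnder_of_eventually_le (hquot_bdd.mono fun _ h => le_of_abs_le h))]
  congr 1
  ext ε
  simp only [Pi.add_apply]
  ring

theorem dini_comp_eq_of_hasFDerivAt {D : E → F} {J : E →L[ℝ] F} {x : E} (hD : HasFDerivAt D J x)
    {b : F → ℝ} {K : NNReal} {s : Set F} (hs : s ∈ 𝓝 (D x)) (hb : LipschitzOnWith K b s) (v : E) :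
    dini (b ∘ D) x v = dini b (D x) (J v) := by
  rw [dini]
  have hline : HasDerivAt (fun ε : ℝ => x + ε • v) v 0 := by
    simpa using ((hasDerivAt_id (0 : ℝ)).smul_const v).const_add x
  have hD' : HasFDerivAt D J (x + (0 : ℝ) • v) := by simpa using hD
  have hcurve : HasDerivAt (fun ε : ℝ => D (x + ε • v)) (J v) 0 := hD'.comp_hasDerivAt 0 hline
  simpa using liminf_slope_comp_eq_dini hcurve (by simpa using hs) hb

theorem cbf_of_equivariance_pointwise_general {n m : ℕ}
    (f : EuclideanSpace ℝ (Fin n) → EuclideanSpace ℝ (Fin m) → EuclideanSpace ℝ (Fin n))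
    (U : Set (EuclideanSpace ℝ (Fin m)))
    (D : EuclideanSpace ℝ (Fin n) → EuclideanSpace ℝ (Fin n))
    (JD : EuclideanSpace ℝ (Fin n) → (EuclideanSpace ℝ (Fin n) →L[ℝ] EuclideanSpace ℝ (Fin n)))
    (hD : ∀ x, HasFDerivAt D (JD x) x)
    (Du : EuclideanSpace ℝ (Fin m) → EuclideanSpace ℝ (Fin m))
    (hDu : ∀ u ∈ U, Du u ∈ U)
    (hequiv : ∀ x, ∀ u ∈ U, JD x (f x u) = f (D x) (Du u))
    (b : EuclideanSpace ℝ (Fin n) → ℝ) (hb : LocallyLipschitz b)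
    (α : ℝ → ℝ)
    (hcbf : ∀ x, ∀ u ∈ U, dini b x (f x u) ≥ -α (b x)) :
    ∀ x, ∀ u ∈ U, dini (fun y => b (D y)) x (f x u) ≥ -α (b (D x)) := by
  intro x u hu
  obtain ⟨K, s, hs, hK⟩ := hb (D x)
  have hcbf_Dx := hcbf (D x) (Du u) (hDu u hu)
  rwa [← hequiv x u hu, ← dini_comp_eq_of_hasFDerivAt (hD x) hs hK] at hcbf_Dx

/-- Transformed CBFs via equivariances (pointwise form). -/
theorem cbf_of_equivariance_pointwise {n m : ℕ}
    (f : EuclideanSpace ℝ (Fin n) → EuclideanSpace ℝ (Fin m) → EuclideanSpace ℝ (Fin n))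
    (U : Set (EuclideanSpace ℝ (Fin m)))
    (D : EuclideanSpace ℝ (Fin n) → EuclideanSpace ℝ (Fin n))
    (JD : EuclideanSpace ℝ (Fin n) → (EuclideanSpace ℝ (Fin n) →L[ℝ] EuclideanSpace ℝ (Fin n)))
    (hD : ∀ x, HasFDerivAt D (JD x) x)
    (Du : EuclideanSpace ℝ (Fin m) → EuclideanSpace ℝ (Fin m))
    (hDu : ∀ u ∈ U, Du u ∈ U)
    (hequiv : ∀ x, ∀ u ∈ U, JD x (f x u) = f (D x) (Du u))
    (b : EuclideanSpace ℝ (Fin n) → ℝ) (hb : LocallyLipschitz b)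
    (α : ℝ → ℝ) (hα_cont : Continuous α) (hα_mono : StrictMono α) (hα0 : α 0 = 0)
    (hcbf : ∀ x, ∀ u ∈ U, dini b x (f x u) ≥ -α (b x)) :
    ∀ x, ∀ u ∈ U, dini (fun y => b (D y)) x (f x u) ≥ -α (b (D x)) :=
  cbf_of_equivariance_pointwise_general f U D JD hD Du hDu hequiv b hb α hcbf
end

section
/- Let b : ℝⁿ → ℝ be Lipschitz with constant ℓ_b, D : ℝⁿ × P → ℝⁿ be C¹ with ‖∂D/∂p‖ ≤ ℓ_D, and p : ℝ≥0 → P be locally Lipschitz with ‖dp(t;1)‖ ≤ c/(ℓ_b ℓ_D) for all t. Then for B(t,x) := b(D(x; p(t))), and any x, u, t, the joint lower Dini derivative satisfies dB(t,x; 1, f(x,u)) ≥ db(D(x;p(t)); (∂D/∂x)(x;p(t))·f(x,u)) − c. -/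
/-!
Let `γ ε = D (x + ε • v) (p (t + ε))`. By the chain rule, `γ' 0 = ∂ₓD v + ∂ₚD (p' t)`, and the
second summand has norm at most `c / ℓb`. Since `b` is `ℓb`-Lipschitz, the difference quotients of
`b` along `γ` and along the line `ε ↦ γ 0 + ε • ∂ₓD v` differ by at most `ℓb * ‖slope γ 0 ε - ∂ₓD v‖`,
which tends to `ℓb * ‖∂ₚD (p' t)‖ ≤ c`; taking `liminf` gives the bound.
-/

open Filter

/-- Joint lower Dini derivative in time (direction 1) and state (direction v). -/
noncomputable def diniT {E : Type*} [NormedAddCommGroup E] [NormedSpace ℝ E]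
    (B : ℝ → E → ℝ) (t : ℝ) (x v : E) : ℝ :=
  Filter.liminf (fun ε : ℝ => (B (t + ε) (x + ε • v) - B t x) / ε) (nhdsWithin 0 (Set.Ioi 0))

open Topology Set NNReal

theorem Filter.liminf_sub_le_liminf_of_abs_sub_le {ι : Type*} {l : Filter ι} [l.NeBot]
    {f g s : ι → ℝ} {S : ℝ} (hs : Tendsto s l (𝓝 S)) (hfg : ∀ᶠ i in l, |f i - g i| ≤ s i)
    (hg_le : l.IsBoundedUnder (· ≤ ·) g) (hg_ge : l.IsBoundedUnder (· ≥ ·) g) :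
    liminf g l - S ≤ liminf f l := by
  have hneg : Tendsto (-s) l (𝓝 (-S)) := hs.neg
  have hd_le : ∀ᶠ i in l, f i - g i ≤ s i := hfg.mono fun _ h => (abs_le.1 h).2
  have hd_ge : ∀ᶠ i in l, -s i ≤ f i - g i := hfg.mono fun _ h => (abs_le.1 h).1
  have hd_bdd_le : l.IsBoundedUnder (· ≤ ·) (f - g) := hs.isBoundedUnder_le.mono_le hd_le
  have hd_bdd_ge : l.IsBoundedUnder (· ≥ ·) (f - g) := hneg.isBoundedUnder_ge.mono_ge hd_ge
  have hd : -S ≤ liminf (f - g) l := by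
    rw [← hneg.liminf_eq]
    exact liminf_le_liminf hd_ge hneg.isBoundedUnder_ge hd_bdd_le.isCoboundedUnder_ge
  calc liminf g l - S = liminf g l + -S := sub_eq_add_neg _ _
    _ ≤ liminf g l + liminf (f - g) l := by gcongr
    _ ≤ liminf (g + (f - g)) l := le_liminf_add hg_ge hg_le hd_bdd_ge hd_bdd_le.isCoboundedUnder_ge
    _ = liminf f l := by rw [add_sub_cancel]

section Dini

variable {E : Type*} [NormedAddCommGroup E] [NormedSpace ℝ E]

theorem LipschitzWith.abs_diffQuot_sub_diffQuot_le {b : E → ℝ} {K : ℝ≥0} (hb : LipschitzWith K b)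
    (y u w : E) {ε : ℝ} (hε : ε ≠ 0) :
    |(b (y + ε • u) - b y) / ε - (b (y + ε • w) - b y) / ε| ≤ K * ‖u - w‖ := by
  have hLip := hb.dist_le_mul (y + ε • u) (y + ε • w)
  rw [Real.dist_eq, dist_add_left, dist_smul₀, dist_eq_norm, Real.norm_eq_abs] at hLip
  rw [div_sub_div_same, sub_sub_sub_cancel_right, abs_div, div_le_iff₀ (abs_pos.mpr hε)]
  linarith

theorem LipschitzWith.dini_sub_le_liminf_comp {b : E → ℝ} {K : ℝ≥0} (hb : LipschitzWith K b)
    {γ : ℝ → E} {u : E} (hγ : HasDerivWithinAt γ u (Ioi 0) 0) (w : E) :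
    dini b (γ 0) w - K * ‖u - w‖ ≤ liminf (fun ε => (b (γ ε) - b (γ 0)) / ε) (𝓝[>] 0) := by
  have hslope : Tendsto (slope γ 0) (𝓝[>] 0) (𝓝 u) :=
    (hasDerivWithinAt_iff_tendsto_slope' (lt_irrefl 0)).1 hγ
  have hcurve : ∀ ε ≠ 0, γ ε = γ 0 + ε • slope γ 0 ε := fun ε hε => by
    rw [slope_def_module, sub_zero, smul_inv_smul₀ hε, add_sub_cancel]
  have hpos : ∀ᶠ ε in 𝓝[>] (0 : ℝ), ε ≠ 0 := eventually_mem_nhdsWithin.mono fun _ h => ne_of_gt h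
  have hdiff : ∀ᶠ ε in 𝓝[>] (0 : ℝ), |(b (γ ε) - b (γ 0)) / ε - (b (γ 0 + ε • w) - b (γ 0)) / ε|
      ≤ K * ‖slope γ 0 ε - w‖ :=
    hpos.mono fun ε hε => by rw [hcurve ε hε]; exact hb.abs_diffQuot_sub_diffQuot_le _ _ _ hε
  have hdini : ∀ᶠ ε in 𝓝[>] (0 : ℝ), |(b (γ 0 + ε • w) - b (γ 0)) / ε| ≤ K * ‖w‖ :=
    hpos.mono fun ε hε => by simpa using hb.abs_diffQuot_sub_diffQuot_le (γ 0) w 0 hε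
  exact liminf_sub_le_liminf_of_abs_sub_le (((hslope.sub_const w).norm).const_mul _) hdiff
    (isBoundedUnder_of_eventually_le (hdini.mono fun _ h => (abs_le.1 h).2))
    (isBoundedUnder_of_eventually_ge (hdini.mono fun _ h => (abs_le.1 h).1))

end Dini

section Calculus

variable {E F G : Type*} [NormedAddCommGroup E] [NormedSpace ℝ E]
  [NormedAddCommGroup F] [NormedSpace ℝ F] [NormedAddCommGroup G] [NormedSpace ℝ G]

theorem HasFDerivAt.eq_coprod_of_partial {f : E → F → G} {L : E × F →L[ℝ] G}
    {A : E →L[ℝ] G} {B : F →L[ℝ] G} {x : E} {q : F}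
    (hf : HasFDerivAt (fun z : E × F => f z.1 z.2) L (x, q))
    (hA : HasFDerivAt (fun y => f y q) A x) (hB : HasFDerivAt (f x) B q) :
    L = A.coprod B := by
  have hA' : HasFDerivAt (fun y => f y q) (L ∘L .inl ℝ E F) x :=
    HasFDerivAt.comp (f := fun y => (y, q)) x hf (hasFDerivAt_prodMk_left x q)
  have hB' : HasFDerivAt (f x) (L ∘L .inr ℝ E F) q :=
    HasFDerivAt.comp (f := fun r => (x, r)) q hf (hasFDerivAt_prodMk_right x q)
  rw [← L.coprod_comp_inl_inr, hA.unique hA', hB.unique hB']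

theorem hasDerivAt_comp_add_smul_of_partial {f : E → F → G} {A : E →L[ℝ] G} {B : F →L[ℝ] G}
    {x : E} {p : ℝ → F} {p' : F} {t : ℝ}
    (hf : DifferentiableAt ℝ (fun z : E × F => f z.1 z.2) (x, p t))
    (hA : HasFDerivAt (fun y => f y (p t)) A x) (hB : HasFDerivAt (f x) B (p t))
    (hp : HasDerivAt p p' t) (v : E) :
    HasDerivAt (fun ε : ℝ => f (x + ε • v) (p (t + ε))) (A v + B p') 0 := by
  have hL := hf.hasFDerivAt
  rw [hL.eq_coprod_of_partial hA hB] at hL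
  have hline : HasDerivAt (fun ε : ℝ => x + ε • v) v 0 := by
    simpa using ((hasDerivAt_id (0 : ℝ)).smul_const v).const_add x
  have hshift : HasDerivAt (fun ε => p (t + ε)) p' 0 :=
    HasDerivAt.comp_const_add t 0 (by rwa [add_zero])
  exact hL.comp_hasDerivAt_of_eq 0 (hline.prodMk hshift) (by simp)

theorem ContinuousLinearMap.mul_norm_apply_le_of_norm_le_div {K L c : ℝ} (hK : 0 ≤ K) (hc : 0 ≤ c)
    {A : F →L[ℝ] G} (hA : ‖A‖ ≤ L) {u : F} (hu : ‖u‖ ≤ c / (K * L)) : K * ‖A u‖ ≤ c := by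
  have hKL : 0 ≤ K * L := mul_nonneg hK ((norm_nonneg _).trans hA)
  calc K * ‖A u‖ ≤ K * (L * ‖u‖) := by gcongr; exact A.le_of_opNorm_le hA u
    _ = K * L * ‖u‖ := by ring
    _ ≤ K * L * (c / (K * L)) := by gcongr
    _ ≤ c := by
      rcases hKL.eq_or_lt with h | h
      · rw [← h, zero_mul]; exact hc
      · rw [mul_div_cancel₀ _ h.ne']

end Calculus

theorem diniT_lower_bound {n k : ℕ}
    (b : EuclideanSpace ℝ (Fin n) → ℝ) (ℓb : NNReal) (hb : LipschitzWith ℓb b)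
    (D : EuclideanSpace ℝ (Fin n) → EuclideanSpace ℝ (Fin k) → EuclideanSpace ℝ (Fin n))
    (DDx : EuclideanSpace ℝ (Fin n) → EuclideanSpace ℝ (Fin k) →
      (EuclideanSpace ℝ (Fin n) →L[ℝ] EuclideanSpace ℝ (Fin n)))
    (DDp : EuclideanSpace ℝ (Fin n) → EuclideanSpace ℝ (Fin k) →
      (EuclideanSpace ℝ (Fin k) →L[ℝ] EuclideanSpace ℝ (Fin n)))
    (hDx : ∀ x q, HasFDerivAt (fun y => D y q) (DDx x q) x)
    (hDp : ∀ x q, HasFDerivAt (D x) (DDp x q) q)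
    (hC1 : ContDiff ℝ 1 (fun z : EuclideanSpace ℝ (Fin n) × EuclideanSpace ℝ (Fin k) => D z.1 z.2))
    (ℓD : ℝ) (hℓD : ∀ x q, ‖DDp x q‖ ≤ ℓD)
    (c : ℝ) (hc : 0 < c)
    (p : ℝ → EuclideanSpace ℝ (Fin k)) (p' : ℝ → EuclideanSpace ℝ (Fin k))
    (hp : ∀ t, HasDerivAt p (p' t) t)
    (hp' : ∀ t, ‖p' t‖ ≤ c / (ℓb * ℓD)) :
    ∀ (t : ℝ) (x v : EuclideanSpace ℝ (Fin n)),
      diniT (fun s y => b (D y (p s))) t x v ≥ dini b (D x (p t)) (DDx x (p t) v) - c := by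
  intro t x v
  have hγ := hasDerivAt_comp_add_smul_of_partial (hC1.differentiable one_ne_zero _)
    (hDx x (p t)) (hDp x (p t)) (hp t) v
  have hdrift : ℓb * ‖DDp x (p t) (p' t)‖ ≤ c :=
    (DDp x (p t)).mul_norm_apply_le_of_norm_le_div ℓb.coe_nonneg hc.le (hℓD x (p t)) (hp' t)
  have hliminf := hb.dini_sub_le_liminf_comp hγ.hasDerivWithinAt (DDx x (p t) v)
  simp only [zero_smul, add_zero, add_sub_cancel_left] at hliminf
  calc dini b (D x (p t)) (DDx x (p t) v) - c
      ≤ dini b (D x (p t)) (DDx x (p t) v) - ℓb * ‖DDp x (p t) (p' t)‖ := by gcongr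
    _ ≤ diniT (fun s y => b (D y (p s))) t x v := hliminf
end
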